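/- For every τ ∈ (0, 1/4): the quartic polynomial q₁ has four distinct complex roots, exactly two of which are real, and the two nonreal roots are complex conjugates of each other; moreover the unique root b_* = (3(1−4τ))^{−1/3} of q₂ is a root of q₁ if and only if τ = 1/12. -/

import Mathlib

noncomputable section

/-- The constant `c = −(243(1−4τ)²/64)^{1/3}` (real cube root). -/
def ccf (τ : ℝ) : ℝ := -(243 * (1 - 4 * τ) ^ 2 / 64) ^ ((1 : ℝ) / 3)

/-- `R(z) = 3z⁴ − 3z − c`. -/
def RR (τ : ℝ) (z : ℂ) : ℂ := 3 * z ^ 4 - 3 * z - (ccf τ : ℂ)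

/-- `D(z) = −2z⁶ + 3z³ + cz² − 3τ`. -/
def DD (τ : ℝ) (z : ℂ) : ℂ :=
  -2 * z ^ 6 + 3 * z ^ 3 + (ccf τ : ℂ) * z ^ 2 - 3 * (τ : ℂ)

/-- The quartic `q₁`. -/
def q1 (τ : ℝ) (z : ℂ) : ℂ :=
  ((256 / (3 : ℝ) ^ ((5 : ℝ) / 3) * (1 - 4 * τ) ^ ((1 : ℝ) / 3) : ℝ) : ℂ) * z ^ 4
    + (128 / 9 : ℂ) * z ^ 3
    + ((16 / (3 : ℝ) ^ ((1 : ℝ) / 3) * (1 - 4 * τ) ^ ((2 : ℝ) / 3) : ℝ) : ℂ) * z ^ 2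
    - ((32 * (3 : ℝ) ^ ((1 : ℝ) / 3) * (1 - 4 * τ) ^ ((1 : ℝ) / 3) : ℝ) : ℂ) * z
    + ((16 * (1 - 8 * τ) : ℝ) : ℂ)

/-- The linear factor `q₂`. -/
def q2 (τ : ℝ) (z : ℂ) : ℂ :=
  (((3 : ℝ) ^ ((1 : ℝ) / 3) * (1 - 4 * τ) ^ ((1 : ℝ) / 3) : ℝ) : ℂ) * z - 1

/-- The double point `b_* = (3(1−4τ))^{−1/3}`. -/
def bstar (τ : ℝ) : ℝ := (3 * (1 - 4 * τ)) ^ (-(1 : ℝ) / 3)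

/-! The substitution `u = (3(1-4τ))^{1/3} z` turns `q₁` into a multiple of the quartic
`Q_t(u) = 16u⁴ + 8u³ + 3tu² - 18tu + 6t² - 9t` with `t = 3(1-4τ) ∈ (0, 3)`. Every critical value
of `Q_t` on the real line is negative. Hence the zeros of `Q_t` are simple, and there are at most
two of them: between the outer two of three zeros, `Q_t` would attain a nonnegative maximum at a
critical point. As `Q_t(t/4) < 0` there are exactly two. Dividing them out leaves a real quadratic
without real zeros, whose zeros form a conjugate pair. Finally `b_*` corresponds to `u = 1`, and
`Q_t(1) = 6(t-2)²`. -/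

open Set

theorem hasDerivAt_eq_of_eq_sub_mul {f g : ℝ → ℝ} {f' r : ℝ} (hf : HasDerivAt f f' r)
    (hg : DifferentiableAt ℝ g r) (hfg : ∀ u, f u = (u - r) * g u) : f' = g r := by
  obtain rfl : f = fun u => (u - r) * g u := funext hfg
  exact hf.unique (by simpa using ((hasDerivAt_id r).sub_const r).fun_mul hg.hasDerivAt)

section

variable {f f' : ℝ → ℝ} (hf : ∀ x, HasDerivAt f (f' x) x) (hcrit : ∀ x, f' x = 0 → f x < 0)
include hf hcrit

theorem false_of_three_zeros_of_critical_neg {x y z : ℝ} (hxy : x < y) (hyz : y < z)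
    (hx : f x = 0) (hy : f y = 0) (hz : f z = 0) : False := by
  have hcont : Continuous f := continuous_iff_continuousAt.2 fun x => (hf x).continuousAt
  obtain ⟨c, hc, hmax⟩ := isCompact_Icc.exists_isMaxOn (nonempty_Icc.2 (hxy.trans hyz).le)
    hcont.continuousOn
  have interior_max_neg : ∀ d ∈ Ioo x z, IsMaxOn f (Icc x z) d → f d < 0 := fun d hd hdmax =>
    hcrit d ((hdmax.isLocalMax (Icc_mem_nhds hd.1 hd.2)).hasDerivAt_eq_zero (hf d))
  have hyc : f y ≤ f c := hmax ⟨hxy.le, hyz.le⟩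
  by_cases hcI : c ∈ Ioo x z
  · linarith [interior_max_neg c hcI hmax]
  · have hfc : f c = 0 := by
      rcases hc.1.eq_or_lt with h | h
      · rw [← h, hx]
      · rw [le_antisymm hc.2 (not_lt.1 fun h' => hcI ⟨h, h'⟩), hz]
    have hymax : IsMaxOn f (Icc x z) y := fun u hu => (hmax hu).trans (hfc.trans hy.symm).le
    linarith [interior_max_neg y ⟨hxy, hyz⟩ hymax]

theorem eq_or_eq_of_zeros_of_critical_neg {a b x : ℝ} (hab : a < b) (ha : f a = 0)
    (hb : f b = 0) (hx : f x = 0) : x = a ∨ x = b := by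
  by_contra! hne
  rcases hne.1.lt_or_gt with hxa | hax
  · exact false_of_three_zeros_of_critical_neg hf hcrit hxa hab hx ha hb
  rcases hne.2.lt_or_gt with hxb | hbx
  · exact false_of_three_zeros_of_critical_neg hf hcrit hax hxb ha hx hb
  · exact false_of_three_zeros_of_critical_neg hf hcrit hab hbx ha hb hx

theorem ne_zero_of_eq_sub_mul_of_critical_neg {g : ℝ → ℝ} {r : ℝ} (hr : f r = 0)
    (hg : DifferentiableAt ℝ g r) (hfg : ∀ u, f u = (u - r) * g u) : g r ≠ 0 := by
  intro hgr
  have := hasDerivAt_eq_of_eq_sub_mul (hf r) hg hfg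
  rw [hgr] at this
  exact (hcrit r this).ne hr

end

theorem quartic_eq_mul_of_roots {K : Type*} [CommRing K] [IsDomain K] {a₄ a₃ a₂ a₁ a₀ r₁ r₂ : K}
    (hne : r₁ ≠ r₂)
    (h₁ : a₄ * r₁ ^ 4 + a₃ * r₁ ^ 3 + a₂ * r₁ ^ 2 + a₁ * r₁ + a₀ = 0)
    (h₂ : a₄ * r₂ ^ 4 + a₃ * r₂ ^ 3 + a₂ * r₂ ^ 2 + a₁ * r₂ + a₀ = 0) (z : K) :
    a₄ * z ^ 4 + a₃ * z ^ 3 + a₂ * z ^ 2 + a₁ * z + a₀ =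
      (z - r₁) * (z - r₂) * (a₄ * z ^ 2 + (a₃ + a₄ * (r₁ + r₂)) * z
        + (a₂ + (r₁ + r₂) * (a₃ + a₄ * (r₁ + r₂)) - a₄ * r₁ * r₂)) := by
  set b := a₃ + a₄ * (r₁ + r₂)
  set c := a₂ + (r₁ + r₂) * b - a₄ * r₁ * r₂
  -- the remainder of the division by `(z - r₁)(z - r₂)` is `α z + β`, and it vanishes at `r₁, r₂`
  set α := a₁ + (r₁ + r₂) * c - r₁ * r₂ * b
  set β := a₀ - r₁ * r₂ * c
  have hrem : ∀ z, a₄ * z ^ 4 + a₃ * z ^ 3 + a₂ * z ^ 2 + a₁ * z + a₀ =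
      (z - r₁) * (z - r₂) * (a₄ * z ^ 2 + b * z + c) + (α * z + β) := by
    intro z; ring
  have hα : α = 0 := by
    have : α * (r₁ - r₂) = 0 := by linear_combination h₁ - h₂ - hrem r₁ + hrem r₂
    exact (mul_eq_zero.1 this).resolve_right (sub_ne_zero.2 hne)
  have hβ : β = 0 := by linear_combination h₁ - hrem r₁ - r₁ * hα
  rw [hrem z, hα, hβ]
  ring

def HasRealConjRoots (f : ℂ → ℂ) : Prop :=
  ∃ (r₁ r₂ : ℝ) (w : ℂ), r₁ ≠ r₂ ∧ w.im ≠ 0 ∧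
    ∀ z : ℂ, f z = 0 ↔ z = (r₁ : ℂ) ∨ z = (r₂ : ℂ) ∨ z = w ∨ z = (starRingEnd ℂ) w

theorem HasRealConjRoots.of_zero_iff_comp_mul {f g : ℂ → ℂ} (hf : HasRealConjRoots f) {s : ℝ}
    (hs : s ≠ 0) (hg : ∀ z, g z = 0 ↔ f (s * z) = 0) : HasRealConjRoots g := by
  obtain ⟨r₁, r₂, w, hne, hw, hroots⟩ := hf
  have hsC : (s : ℂ) ≠ 0 := Complex.ofReal_ne_zero.2 hs
  have hmul : ∀ a z : ℂ, (s : ℂ) * z = a ↔ z = (s : ℂ)⁻¹ * a := fun a z => by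
    rw [eq_inv_mul_iff_mul_eq₀ hsC]
  refine ⟨s⁻¹ * r₁, s⁻¹ * r₂, (s : ℂ)⁻¹ * w, ?_, ?_, fun z => ?_⟩
  · exact fun h => hne (mul_left_cancel₀ (inv_ne_zero hs) h)
  · simpa [Complex.mul_im, ← Complex.ofReal_inv] using And.intro hs hw
  · simp only [hg, hroots, hmul, map_mul, map_inv₀, Complex.conj_ofReal, Complex.ofReal_mul,
      Complex.ofReal_inv]

theorem quadratic_eq_zero_iff_of_discrim_neg {a b c : ℝ} (ha : a ≠ 0) (hD : discrim a b c < 0) :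
    ∃ w : ℂ, w.im ≠ 0 ∧
      ∀ z : ℂ, a * z ^ 2 + b * z + c = 0 ↔ z = w ∨ z = (starRingEnd ℂ) w := by
  set d : ℝ := -discrim a b c
  set s : ℂ := Real.sqrt d * Complex.I
  have hsqrt : ((Real.sqrt d : ℝ) : ℂ) ^ 2 = d := by exact_mod_cast Real.sq_sqrt (by linarith)
  have hs : discrim (a : ℂ) b c = s * s := by
    have hcast : discrim (a : ℂ) b c = -(d : ℂ) := by simp [d, discrim]
    rw [hcast]
    linear_combination (-Complex.I ^ 2) * hsqrt - (d : ℂ) * Complex.I_sq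
  refine ⟨(-b + s) / (2 * a), ?_, fun z => ?_⟩
  · simpa [s, Complex.div_im, ha] using (Real.sqrt_pos.2 (by linarith : 0 < d)).ne'
  · have hconj : (starRingEnd ℂ) ((-b + s) / (2 * a)) = (-b - s) / (2 * a) := by
      simp [s, map_div₀, map_ofNat]
      ring
    rw [hconj, sq, ← quadratic_eq_zero_iff (Complex.ofReal_ne_zero.2 ha) hs z]

def normQuartic {R : Type*} [CommRing R] (t u : R) : R :=
  16 * u ^ 4 + 8 * u ^ 3 + 3 * t * u ^ 2 - 18 * t * u + 6 * t ^ 2 - 9 * t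

theorem normQuartic_ofReal (t u : ℝ) : normQuartic (t : ℂ) u = ((normQuartic t u : ℝ) : ℂ) := by
  simp [normQuartic]

theorem hasDerivAt_normQuartic (t u : ℝ) :
    HasDerivAt (normQuartic t) (64 * u ^ 3 + 24 * u ^ 2 + 6 * t * u - 18 * t) u := by
  have h := ((((hasDerivAt_pow 4 u).const_mul 16).fun_add
    ((hasDerivAt_pow 3 u).const_mul 8)).fun_add ((hasDerivAt_pow 2 u).const_mul (3 * t))).fun_sub
    ((hasDerivAt_id' u).const_mul (18 * t))
  have hQ : normQuartic t = fun x => 16 * x ^ 4 + 8 * x ^ 3 + 3 * t * x ^ 2 - 18 * t * x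
      + (6 * t ^ 2 - 9 * t) := by
    funext x; unfold normQuartic; ring
  rw [hQ]
  exact (h.add_const (6 * t ^ 2 - 9 * t)).congr_deriv (by norm_num; ring)

theorem normQuartic_neg_of_deriv_eq_zero {t u : ℝ} (ht0 : 0 < t) (ht3 : t < 3)
    (h : 64 * u ^ 3 + 24 * u ^ 2 + 6 * t * u - 18 * t = 0) : normQuartic t u < 0 := by
  have ht : 3 * t * (3 - u) = 4 * u ^ 2 * (8 * u + 3) := by linear_combination -h / 2
  have hu3 : u < 3 := by nlinarith [sq_nonneg u]
  obtain ⟨hu0, hu38⟩ : 0 < u ^ 2 ∧ 0 < 8 * u + 3 := by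
    refine (pos_and_pos_or_neg_and_neg_of_mul_pos (a := u ^ 2) ?_).resolve_right
      fun h => (sq_nonneg u).not_gt h.1
    nlinarith [mul_pos ht0 (sub_pos.2 hu3)]
  have hu34 : u < 3 / 4 := by nlinarith [sq_nonneg (u + 1)]
  -- substitute `t = 4u²(8u + 3) / (3(3 - u))`, read off from `ht`, into `Q_t(u)`
  have key : 36 * (3 - u) ^ 2 * normQuartic t u = 48 * u ^ 2 * (4 * u - 3) * (5 * u + 3) ^ 3 := by
    unfold normQuartic
    linear_combination (-(36 * t * (3 - u) + 6 * (64 * u ^ 3 + 24 * u ^ 2)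
      + 6 * (3 - u) * (3 * u ^ 2 - 18 * u - 9))) * h
  have hneg : 48 * u ^ 2 * (4 * u - 3) * (5 * u + 3) ^ 3 < 0 := by
    have : 0 < (5 * u + 3) ^ 3 := pow_pos (by linarith) 3
    nlinarith [mul_pos hu0 this]
  nlinarith [sq_nonneg (3 - u)]

theorem exists_normQuartic_eq_zero {t : ℝ} (ht0 : 0 < t) (ht3 : t < 3) :
    ∃ r₁ r₂ : ℝ, r₁ < r₂ ∧ normQuartic t r₁ = 0 ∧ normQuartic t r₂ = 0 := by
  have hcont : Continuous (normQuartic t) :=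
    continuous_iff_continuousAt.2 fun u => (hasDerivAt_normQuartic t u).continuousAt
  have hmid : normQuartic t (t / 4) < 0 := by
    have : normQuartic t (t / 4) = -(t * (3 - t) * (t ^ 2 + 8 * t + 48)) / 16 := by
      unfold normQuartic; ring
    rw [this]
    have := mul_pos (mul_pos ht0 (sub_pos.2 ht3)) (by positivity : 0 < t ^ 2 + 8 * t + 48)
    linarith
  have hleft : 0 < normQuartic t (-1) := by unfold normQuartic; nlinarith
  have hright : 0 < normQuartic t 2 := by unfold normQuartic; nlinarith
  obtain ⟨r₁, hr₁, h₁⟩ := intermediate_value_Ioo' (by linarith : (-1 : ℝ) ≤ t / 4)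
    hcont.continuousOn ⟨hmid, hleft⟩
  obtain ⟨r₂, hr₂, h₂⟩ := intermediate_value_Ioo (by linarith : t / 4 ≤ 2)
    hcont.continuousOn ⟨hmid, hright⟩
  exact ⟨r₁, r₂, hr₁.2.trans hr₂.1, h₁, h₂⟩

theorem normQuartic_eq_mul_of_roots {K : Type*} [CommRing K] [IsDomain K] {t r₁ r₂ : K}
    (hne : r₁ ≠ r₂) (h₁ : normQuartic t r₁ = 0) (h₂ : normQuartic t r₂ = 0) (z : K) :
    normQuartic t z = (z - r₁) * (z - r₂) * (16 * z ^ 2 + (8 + 16 * (r₁ + r₂)) * z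
      + (3 * t + (r₁ + r₂) * (8 + 16 * (r₁ + r₂)) - 16 * r₁ * r₂)) := by
  unfold normQuartic at *
  linear_combination quartic_eq_mul_of_roots (a₄ := 16) (a₃ := 8) (a₂ := 3 * t) (a₁ := -18 * t)
    (a₀ := 6 * t ^ 2 - 9 * t) hne (by linear_combination h₁) (by linear_combination h₂) z

theorem discrim_neg_of_normQuartic_eq_zero {t r₁ r₂ : ℝ} (ht0 : 0 < t) (ht3 : t < 3)
    (hlt : r₁ < r₂) (h₁ : normQuartic t r₁ = 0) (h₂ : normQuartic t r₂ = 0) :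
    discrim 16 (8 + 16 * (r₁ + r₂)) (3 * t + (r₁ + r₂) * (8 + 16 * (r₁ + r₂)) - 16 * r₁ * r₂)
      < 0 := by
  have hfac := normQuartic_eq_mul_of_roots hlt.ne h₁ h₂
  set b := 8 + 16 * (r₁ + r₂)
  set c := 3 * t + (r₁ + r₂) * b - 16 * r₁ * r₂
  have hcrit : ∀ u, 64 * u ^ 3 + 24 * u ^ 2 + 6 * t * u - 18 * t = 0 → normQuartic t u < 0 :=
    fun u => normQuartic_neg_of_deriv_eq_zero ht0 ht3
  have hq₁ : 16 * r₁ ^ 2 + b * r₁ + c ≠ 0 := right_ne_zero_of_mul <|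
    ne_zero_of_eq_sub_mul_of_critical_neg (hasDerivAt_normQuartic t) hcrit h₁
      (g := fun u => (u - r₂) * (16 * u ^ 2 + b * u + c)) (by fun_prop) fun u => by rw [hfac]; ring
  have hq₂ : 16 * r₂ ^ 2 + b * r₂ + c ≠ 0 := right_ne_zero_of_mul <|
    ne_zero_of_eq_sub_mul_of_critical_neg (hasDerivAt_normQuartic t) hcrit h₂
      (g := fun u => (u - r₁) * (16 * u ^ 2 + b * u + c)) (by fun_prop) fun u => by rw [hfac]; ring
  have hq : ∀ x : ℝ, 16 * x ^ 2 + b * x + c ≠ 0 := by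
    intro x hx
    have hQx : normQuartic t x = 0 := by rw [hfac, hx, mul_zero]
    rcases eq_or_eq_of_zeros_of_critical_neg (hasDerivAt_normQuartic t) hcrit hlt h₁ h₂ hQx
      with rfl | rfl
    exacts [hq₁ hx, hq₂ hx]
  by_contra! hD
  obtain ⟨x, hx⟩ := exists_quadratic_eq_zero (by norm_num : (16 : ℝ) ≠ 0)
    ⟨_, (Real.mul_self_sqrt hD).symm⟩
  exact hq x (by linear_combination hx)

theorem hasRealConjRoots_normQuartic {t : ℝ} (ht0 : 0 < t) (ht3 : t < 3) :
    HasRealConjRoots (normQuartic (t : ℂ)) := by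
  obtain ⟨r₁, r₂, hlt, h₁, h₂⟩ := exists_normQuartic_eq_zero ht0 ht3
  obtain ⟨w, hw, hroots⟩ := quadratic_eq_zero_iff_of_discrim_neg (by norm_num)
    (discrim_neg_of_normQuartic_eq_zero ht0 ht3 hlt h₁ h₂)
  have hfac := normQuartic_eq_mul_of_roots (t := (t : ℂ)) (Complex.ofReal_injective.ne hlt.ne)
    (by simp [normQuartic_ofReal, h₁]) (by simp [normQuartic_ofReal, h₂])
  refine ⟨r₁, r₂, w, hlt.ne, hw, fun z => ?_⟩
  rw [hfac z, mul_eq_zero, mul_eq_zero, sub_eq_zero, sub_eq_zero, or_assoc, ← hroots z]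
  push_cast
  ring_nf

theorem q1_eq_normQuartic {τ : ℝ} (hτ : τ < 1 / 4) (z : ℂ) :
    q1 τ z = 16 / (27 * (1 - 4 * τ)) *
      normQuartic ((3 * (1 - 4 * τ) : ℝ) : ℂ) (((3 * (1 - 4 * τ)) ^ ((1 : ℝ) / 3) : ℝ) * z) := by
  have hx : 0 < 1 - 4 * τ := by linarith
  set k : ℝ := 3 ^ ((1 : ℝ) / 3)
  set a : ℝ := (1 - 4 * τ) ^ ((1 : ℝ) / 3)
  have hk3 : k ^ 3 = 3 := by
    simpa [k, one_div] using Real.rpow_inv_natCast_pow (by norm_num : (0 : ℝ) ≤ 3) three_ne_zero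
  have ha3 : a ^ 3 = 1 - 4 * τ := by
    simpa [a, one_div] using Real.rpow_inv_natCast_pow hx.le three_ne_zero
  have hk : k ≠ 0 := by positivity
  have ha : a ≠ 0 := by positivity
  have h4 : 256 / 3 ^ ((5 : ℝ) / 3) * a = 256 * (k * a) / 9 := by
    have h53 : (3 : ℝ) ^ ((5 : ℝ) / 3) = k ^ 5 := by
      rw [show (5 : ℝ) / 3 = 1 / 3 * (5 : ℕ) by norm_num, Real.rpow_mul_natCast (by norm_num)]
    rw [h53]
    field_simp
    linear_combination (-(k ^ 3 + 3)) * hk3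
  have h2 : 16 / k * (1 - 4 * τ) ^ ((2 : ℝ) / 3) = 16 * (k * a) ^ 2 / 3 := by
    have h23 : (1 - 4 * τ) ^ ((2 : ℝ) / 3) = a ^ 2 := by
      rw [show (2 : ℝ) / 3 = 1 / 3 * (2 : ℕ) by norm_num, Real.rpow_mul_natCast hx.le]
    rw [h23]
    field_simp
    linear_combination -hk3
  have hs : (3 * (1 - 4 * τ)) ^ ((1 : ℝ) / 3) = k * a := Real.mul_rpow (by norm_num) hx.le
  have hτs : (τ : ℂ) = (3 - ((k * a : ℝ) : ℂ) ^ 3) / 12 := by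
    have : (k * a) ^ 3 = 3 * (1 - 4 * τ) := by rw [mul_pow, hk3, ha3]
    rw [← Complex.ofReal_pow, this]; push_cast; ring
  have h27 : 27 * (1 - 4 * (τ : ℂ)) = 9 * ((k * a : ℝ) : ℂ) ^ 3 := by rw [hτs]; ring
  have hka : ((k * a : ℝ) : ℂ) ≠ 0 := by exact_mod_cast mul_ne_zero hk ha
  unfold q1 normQuartic
  rw [h4, h2, hs, mul_assoc 32 k a]
  generalize k * a = s at hτs h27 hka ⊢
  push_cast
  rw [h27, hτs]
  field_simp
  ring

theorem q1_bstar {τ : ℝ} (hτ : τ < 1 / 4) :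
    q1 τ (bstar τ) = ((32 * (1 - 12 * τ) ^ 2 / (9 * (1 - 4 * τ)) : ℝ) : ℂ) := by
  have hx : 0 < 3 * (1 - 4 * τ) := by linarith
  have hsb : (3 * (1 - 4 * τ)) ^ ((1 : ℝ) / 3) * bstar τ = 1 := by
    rw [bstar, ← Real.rpow_add hx]; norm_num
  have hx' : (1 - 4 * (τ : ℂ)) ≠ 0 := by exact_mod_cast (by linarith : 1 - 4 * τ ≠ 0)
  rw [q1_eq_normQuartic hτ, ← Complex.ofReal_mul, hsb]
  unfold normQuartic
  push_cast
  field_simp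
  ring

/-- For every `τ ∈ (0, 1/4)`, the quartic `q₁` has four distinct complex
roots, exactly two of which are real, and the two nonreal roots are complex conjugates;
moreover the root `b_* = (3(1−4τ))^{−1/3}` of `q₂` is a root of `q₁` iff `τ = 1/12`. -/
theorem q1_roots (τ : ℝ) (hτ : τ ∈ Set.Ioo (0 : ℝ) (1 / 4)) :
    (∃ (r₁ r₂ : ℝ) (w : ℂ), r₁ ≠ r₂ ∧ w.im ≠ 0 ∧
      ∀ z : ℂ, q1 τ z = 0 ↔ z = (r₁ : ℂ) ∨ z = (r₂ : ℂ) ∨ z = w ∨ z = (starRingEnd ℂ) w) ∧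
    (q1 τ ((bstar τ : ℝ) : ℂ) = 0 ↔ τ = 1 / 12) := by
  obtain ⟨hτ0, hτ4⟩ := hτ
  have hx : 0 < 1 - 4 * τ := by linarith
  have hc : (16 / (27 * (1 - 4 * τ)) : ℂ) ≠ 0 := by
    have : (1 - 4 * (τ : ℂ)) ≠ 0 := by exact_mod_cast hx.ne'
    simpa using this
  refine ⟨(hasRealConjRoots_normQuartic (t := 3 * (1 - 4 * τ)) (by linarith) (by linarith)
    ).of_zero_iff_comp_mul (s := (3 * (1 - 4 * τ)) ^ ((1 : ℝ) / 3)) (by positivity) fun z => ?_, ?_⟩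
  · rw [q1_eq_normQuartic hτ4, mul_eq_zero, or_iff_right hc]
  · rw [q1_bstar hτ4, Complex.ofReal_eq_zero, div_eq_zero_iff, or_iff_left (by positivity),
      mul_eq_zero, or_iff_right (by norm_num), pow_eq_zero_iff two_ne_zero, sub_eq_zero]
    constructor <;> intro h <;> linarith
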